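/- Suppose σ_{y·zx} > 0 (i.e. R²_{y·zx} < 1), σ_{z·x} > 0, σ_{w·x} > 0, σ_{w·zx} > 0, σ_{z·wx} > 0 (i.e. t_W is finite), and df > 1. Then the nominal standard errors of the Z-coefficient with and without adjustment for W satisfy SE(β̂) = SE(b̂) · √(1 + (1 + t_W²)/(df − 1)) · √(1 − ρ²_{yw·zx}). -/

import Mathlib

/-!
Adding one regressor `V` to a collection `C` changes the projection of `A` by the projection of
`A - blp(A|C)` onto the single residual `V - blp(V|C)` (Frisch–Waugh–Lovell), so the residual
variance drops to `σ²_{a·c} - σ_{av·c}² / σ²_{v·c}`. Applied to `Z` with `W` added to `X`, and to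
`Y` with `W` added to `(X, Z)`, this gives `σ²_{z·wx}` and `σ²_{y·zxw}` in terms of the
quantities in `SE(b̂)`, `t_W` and `ρ_{yw·zx}`; the identity is then algebra.
-/

open scoped BigOperators

/-- Weighted inner product on ℝⁿ: `(A,B) := (∑ i, wᵢ Aᵢ Bᵢ) / (∑ i, wᵢ)`. -/
noncomputable def wip {n : ℕ} (w A B : Fin n → ℝ) : ℝ :=
  (∑ i, w i * A i * B i) / (∑ i, w i)

/-- `P` is the best linear predictor (orthogonal projection with respect to the
weighted inner product `wip w`) of `A` onto the span of the collection `C`. -/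
def IsBlp {n : ℕ} (w : Fin n → ℝ) (C : Set (Fin n → ℝ)) (A P : Fin n → ℝ) : Prop :=
  P ∈ Submodule.span ℝ C ∧ ∀ v ∈ Submodule.span ℝ C, wip w (A - P) v = 0

section wip

variable {n : ℕ} (w : Fin n → ℝ)

lemma wip_comm (A B : Fin n → ℝ) : wip w A B = wip w B A := by
  unfold wip
  congr 1
  exact Finset.sum_congr rfl fun i _ => by ring

lemma wip_add_left (A B C : Fin n → ℝ) : wip w (A + B) C = wip w A C + wip w B C := by
  unfold wip
  rw [← add_div, ← Finset.sum_add_distrib]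
  congr 1
  exact Finset.sum_congr rfl fun i _ => by simp only [Pi.add_apply]; ring

lemma wip_sub_left (A B C : Fin n → ℝ) : wip w (A - B) C = wip w A C - wip w B C := by
  unfold wip
  rw [← sub_div, ← Finset.sum_sub_distrib]
  congr 1
  exact Finset.sum_congr rfl fun i _ => by simp only [Pi.sub_apply]; ring

lemma wip_smul_left (r : ℝ) (A B : Fin n → ℝ) : wip w (r • A) B = r * wip w A B := by
  unfold wip
  rw [← mul_div_assoc, Finset.mul_sum]
  congr 1
  exact Finset.sum_congr rfl fun i _ => by simp only [Pi.smul_apply, smul_eq_mul]; ring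

lemma wip_add_right (A B C : Fin n → ℝ) : wip w A (B + C) = wip w A B + wip w A C := by
  rw [wip_comm, wip_add_left, wip_comm w B, wip_comm w C]

lemma wip_sub_right (A B C : Fin n → ℝ) : wip w A (B - C) = wip w A B - wip w A C := by
  rw [wip_comm, wip_sub_left, wip_comm w B, wip_comm w C]

lemma wip_smul_right (r : ℝ) (A B : Fin n → ℝ) : wip w A (r • B) = r * wip w A B := by
  rw [wip_comm, wip_smul_left, wip_comm w B]

variable {w}

lemma eq_zero_of_wip_self_eq_zero (hw : ∀ i, 0 < w i) {A : Fin n → ℝ}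
    (h : wip w A A = 0) : A = 0 := by
  funext i
  have hS : 0 < ∑ j, w j := Finset.sum_pos (fun j _ => hw j) ⟨i, Finset.mem_univ i⟩
  have hterms := (Finset.sum_eq_zero_iff_of_nonneg
    (fun j _ => by nlinarith [hw j, mul_self_nonneg (A j)])).mp
    ((div_eq_zero_iff.mp h).resolve_right hS.ne') i (Finset.mem_univ i)
  rw [mul_assoc] at hterms
  exact mul_self_eq_zero.mp ((mul_eq_zero.mp hterms).resolve_left (hw i).ne')

lemma wip_sub_proj_self {x y : Fin n → ℝ} (hy : wip w y y ≠ 0) :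
    wip w (x - (wip w x y / wip w y y) • y) (x - (wip w x y / wip w y y) • y) =
      wip w x x - wip w x y ^ 2 / wip w y y := by
  rw [wip_sub_left, wip_sub_right, wip_sub_right, wip_smul_left, wip_smul_left,
    wip_smul_right, wip_smul_right, wip_comm w y x]
  field_simp
  ring

end wip

namespace IsBlp

variable {n : ℕ} {w : Fin n → ℝ} {C : Set (Fin n → ℝ)} {V A P R Q : Fin n → ℝ}

lemma unique (hw : ∀ i, 0 < w i) (hP : IsBlp w C A P) (hQ : IsBlp w C A Q) : P = Q := by
  have hPQ : P - Q ∈ Submodule.span ℝ C := sub_mem hP.1 hQ.1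
  have hself : wip w (P - Q) (P - Q) = 0 := by
    nth_rewrite 1 [show P - Q = (A - Q) - (A - P) by abel]
    rw [wip_sub_left, hQ.2 _ hPQ, hP.2 _ hPQ, sub_zero]
  exact sub_eq_zero.mp (eq_zero_of_wip_self_eq_zero hw hself)

lemma insert_add_smul (hP : IsBlp w C A P) (hR : IsBlp w C V R)
    (hV : wip w (V - R) (V - R) ≠ 0) :
    IsBlp w (insert V C) A (P + (wip w (A - P) (V - R) / wip w (V - R) (V - R)) • (V - R)) := by
  set l := wip w (A - P) (V - R) / wip w (V - R) (V - R)
  have hmono : Submodule.span ℝ C ≤ Submodule.span ℝ (insert V C) :=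
    Submodule.span_mono (Set.subset_insert _ _)
  have hVmem : V ∈ Submodule.span ℝ (insert V C) := Submodule.subset_span (Set.mem_insert _ _)
  refine ⟨add_mem (hmono hP.1) (Submodule.smul_mem _ _ (sub_mem hVmem (hmono hR.1))), ?_⟩
  rintro _ hv
  obtain ⟨c, z, hz, rfl⟩ := Submodule.mem_span_insert.mp hv
  -- split `c • V + z` into a multiple of the new residual `V - R` and a vector of `span C`
  have hu : c • R + z ∈ Submodule.span ℝ C := add_mem (Submodule.smul_mem _ _ hR.1) hz
  have hl : l * wip w (V - R) (V - R) = wip w (A - P) (V - R) := div_mul_cancel₀ _ hV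
  rw [show A - (P + l • (V - R)) = (A - P) - l • (V - R) by abel,
    show c • V + z = c • (V - R) + (c • R + z) by rw [smul_sub]; abel, wip_add_right,
    wip_smul_right, wip_sub_left w (A - P), wip_smul_left, hl, sub_self,
    wip_sub_left w (A - P), wip_smul_left, hP.2 _ hu, hR.2 _ hu]
  ring

lemma sub_eq_of_insert (hQ : IsBlp w (insert V C) A Q) (hw : ∀ i, 0 < w i)
    (hP : IsBlp w C A P) (hR : IsBlp w C V R) (hV : wip w (V - R) (V - R) ≠ 0) :
    A - Q = (A - P) - (wip w (A - P) (V - R) / wip w (V - R) (V - R)) • (V - R) := by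
  rw [hQ.unique hw (hP.insert_add_smul hR hV), sub_add_eq_sub_sub]

lemma wip_sub_self_of_insert (hQ : IsBlp w (insert V C) A Q) (hw : ∀ i, 0 < w i)
    (hP : IsBlp w C A P) (hR : IsBlp w C V R) (hV : wip w (V - R) (V - R) ≠ 0) :
    wip w (A - Q) (A - Q) =
      wip w (A - P) (A - P) - wip w (A - P) (V - R) ^ 2 / wip w (V - R) (V - R) := by
  rw [hQ.sub_eq_of_insert hw hP hR hV, wip_sub_proj_self hV]

end IsBlp

section algebra

open Real

lemma one_add_one_add_tStat_sq_div {D vz vw vzw s : ℝ} (hD : 1 < D) (hvw : 0 < vw)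
    (hvzw : 0 < vzw) (h : vzw = vz - s ^ 2 / vw) :
    1 + (1 + (s / vw / (√vzw / (√D * √vw))) ^ 2) / (D - 1) = D * vz / ((D - 1) * vzw) := by
  have hD1 : D - 1 ≠ 0 := (sub_pos.mpr hD).ne'
  rw [div_pow, div_pow, div_pow, mul_pow, sq_sqrt (show 0 ≤ D by linarith), sq_sqrt hvw.le,
    sq_sqrt hvzw.le]
  have hvz : vz = vzw + s ^ 2 / vw := by linarith
  rw [hvz]
  field_simp
  ring

lemma one_sub_corr_sq {vy vx r f : ℝ} (hvy : 0 < vy) (hvx : 0 ≤ vx)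
    (h : f = vy - r ^ 2 / vx) : 1 - (r / (√vy * √vx)) ^ 2 = f / vy := by
  rw [div_pow, mul_pow, sq_sqrt hvy.le, sq_sqrt hvx, h, sub_div, div_self hvy.ne', div_div,
    mul_comm vx]

lemma sqrt_div_sqrt_mul_sqrt_eq {D vy vz vzw f : ℝ} (hD : 1 < D) (hvy : 0 < vy) (hvz : 0 < vz)
    (hvzw : 0 < vzw) :
    √f / (√(D - 1) * √vzw) = √vy / (√D * √vz) * √(D * vz / ((D - 1) * vzw)) * √(f / vy) := by
  have hD1 : 0 < D - 1 := sub_pos.mpr hD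
  rw [sqrt_div' _ (by positivity), sqrt_div' _ hvy.le, sqrt_mul (by linarith), sqrt_mul hD1.le]
  have : 0 < √D := sqrt_pos.mpr (by linarith)
  have : 0 < √vy := sqrt_pos.mpr hvy
  have : 0 < √vz := sqrt_pos.mpr hvz
  field_simp

end algebra

theorem stmt4_general {n : ℕ} (w : Fin n → ℝ) (hw : ∀ i, 0 < w i)
    (X : Set (Fin n → ℝ))
    (Y Z W : Fin n → ℝ)
    (Pzx Pwx Pyzx Pwzx Pzwx Pyzxw : Fin n → ℝ)
    (hPzx : IsBlp w X Z Pzx)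
    (hPwx : IsBlp w X W Pwx)
    (hPyzx : IsBlp w (insert Z X) Y Pyzx)
    (hPwzx : IsBlp w (insert Z X) W Pwzx)
    (hPzwx : IsBlp w (insert W X) Z Pzwx)
    (hPyzxw : IsBlp w (insert Z (insert W X)) Y Pyzxw)
    (hσyzx : 0 < wip w (Y - Pyzx) (Y - Pyzx))
    (hσzx : 0 < wip w (Z - Pzx) (Z - Pzx))
    (hσwx : 0 < wip w (W - Pwx) (W - Pwx))
    (hσwzx : 0 < wip w (W - Pwzx) (W - Pwzx))
    (hσzwx : 0 < wip w (Z - Pzwx) (Z - Pzwx))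
    (hdf : 1 < (n : ℝ) - (Module.finrank ℝ (Submodule.span ℝ X) : ℝ) - 1) :
    let df : ℝ := (n : ℝ) - (Module.finrank ℝ (Submodule.span ℝ X) : ℝ) - 1
    let σyzx := Real.sqrt (wip w (Y - Pyzx) (Y - Pyzx))
    let σzx := Real.sqrt (wip w (Z - Pzx) (Z - Pzx))
    let σwx := Real.sqrt (wip w (W - Pwx) (W - Pwx))
    let σwzx := Real.sqrt (wip w (W - Pwzx) (W - Pwzx))
    let σzwx := Real.sqrt (wip w (Z - Pzwx) (Z - Pzwx))
    let σyzxw := Real.sqrt (wip w (Y - Pyzxw) (Y - Pyzxw))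
    let SEb := σyzx / (Real.sqrt df * σzx)
    let SEbeta := σyzxw / (Real.sqrt (df - 1) * σzwx)
    let tW := (wip w (W - Pwx) (Z - Pzx) / wip w (W - Pwx) (W - Pwx)) /
      (σzwx / (Real.sqrt df * σwx))
    let ρ := wip w (Y - Pyzx) (W - Pwzx) / (σyzx * σwzx)
    SEbeta = SEb * Real.sqrt (1 + (1 + tW ^ 2) / (df - 1)) * Real.sqrt (1 - ρ ^ 2) := by
  intro df σyzx σzx σwx σwzx σzwx σyzxw SEb SEbeta tW ρ
  have hvzwx := hPzwx.wip_sub_self_of_insert hw hPzx hPwx hσwx.ne'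
  rw [wip_comm w (Z - Pzx) (W - Pwx)] at hvzwx
  have hvyzxw := (Set.insert_comm Z W X ▸ hPyzxw).wip_sub_self_of_insert hw hPyzx hPwzx hσwzx.ne'
  simp only [SEbeta, SEb, tW, ρ, σyzx, σzx, σwx, σwzx, σzwx, σyzxw, df]
  rw [one_add_one_add_tStat_sq_div hdf hσwx hσzwx hvzwx, one_sub_corr_sq hσyzx hσwzx.le hvyzxw]
  exact sqrt_div_sqrt_mul_sqrt_eq hdf hσyzx hσzx hσzwx

/-- Proposition 2 of Hosman–Hansen–Holland: if `σ_{y·zx} > 0`,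
`σ_{z·x} > 0`, `σ_{w·x} > 0`, `σ_{w·zx} > 0`, `σ_{z·wx} > 0` and `df > 1`, then
`SE(β̂) = SE(b̂) · √(1 + (1 + t_W²)/(df − 1)) · √(1 − ρ²_{yw·zx})`. -/
theorem stmt4 {n : ℕ} (w : Fin n → ℝ) (hw : ∀ i, 0 < w i)
    (X : Set (Fin n → ℝ)) (hXfin : X.Finite)
    (h1 : (fun _ => (1 : ℝ)) ∈ Submodule.span ℝ X)
    (Y Z W : Fin n → ℝ)
    (Pzx Pwx Pyzx Pwzx Pzwx Pyzxw : Fin n → ℝ)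
    (hPzx : IsBlp w X Z Pzx)
    (hPwx : IsBlp w X W Pwx)
    (hPyzx : IsBlp w (insert Z X) Y Pyzx)
    (hPwzx : IsBlp w (insert Z X) W Pwzx)
    (hPzwx : IsBlp w (insert W X) Z Pzwx)
    (hPyzxw : IsBlp w (insert Z (insert W X)) Y Pyzxw)
    (hσyzx : 0 < wip w (Y - Pyzx) (Y - Pyzx))
    (hσzx : 0 < wip w (Z - Pzx) (Z - Pzx))
    (hσwx : 0 < wip w (W - Pwx) (W - Pwx))
    (hσwzx : 0 < wip w (W - Pwzx) (W - Pwzx))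
    (hσzwx : 0 < wip w (Z - Pzwx) (Z - Pzwx))
    (hdf : 1 < (n : ℝ) - (Module.finrank ℝ (Submodule.span ℝ X) : ℝ) - 1) :
    let df : ℝ := (n : ℝ) - (Module.finrank ℝ (Submodule.span ℝ X) : ℝ) - 1
    let σyzx := Real.sqrt (wip w (Y - Pyzx) (Y - Pyzx))
    let σzx := Real.sqrt (wip w (Z - Pzx) (Z - Pzx))
    let σwx := Real.sqrt (wip w (W - Pwx) (W - Pwx))
    let σwzx := Real.sqrt (wip w (W - Pwzx) (W - Pwzx))
    let σzwx := Real.sqrt (wip w (Z - Pzwx) (Z - Pzwx))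
    let σyzxw := Real.sqrt (wip w (Y - Pyzxw) (Y - Pyzxw))
    let SEb := σyzx / (Real.sqrt df * σzx)
    let SEbeta := σyzxw / (Real.sqrt (df - 1) * σzwx)
    let tW := (wip w (W - Pwx) (Z - Pzx) / wip w (W - Pwx) (W - Pwx)) /
      (σzwx / (Real.sqrt df * σwx))
    let ρ := wip w (Y - Pyzx) (W - Pwzx) / (σyzx * σwzx)
    SEbeta = SEb * Real.sqrt (1 + (1 + tW ^ 2) / (df - 1)) * Real.sqrt (1 - ρ ^ 2) :=
  stmt4_general w hw X Y Z W Pzx Pwx Pyzx Pwzx Pzwx Pyzxw hPzx hPwx hPyzx hPwzx hPzwx hPyzxw hσyzx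
    hσzx hσwx hσwzx hσzwx hdf
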